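/- For every integer m ≥ 3 and every positive integer k, the theta graph with k legs, each of length m, is cubical. -/

import Mathlib

open SimpleGraph

/-- The hypercube graph `Q_n`. -/
def hypercube (n : ℕ) : SimpleGraph (Finset (Fin n)) where
  Adj A B := (A ⊆ B ∧ B.card = A.card + 1) ∨ (B ⊆ A ∧ A.card = B.card + 1)
  symm := ⟨fun A B h => h.symm⟩
  loopless := by
    refine ⟨fun A h => ?_⟩
    rcases h with ⟨-, h⟩ | ⟨-, h⟩ <;> omega

/-- `G` contains a copy of `H`, i.e. `H` is isomorphic to a subgraph of `G`. -/
def ContainsCopy {α β : Type*} (G : SimpleGraph α) (H : SimpleGraph β) : Prop :=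
  ∃ f : β → α, Function.Injective f ∧ ∀ u v, H.Adj u v → G.Adj (f u) (f v)

/-- A graph is cubical if it is isomorphic to a subgraph of a hypercube. -/
def IsCubical {V : Type*} (G : SimpleGraph V) : Prop :=
  ∃ n : ℕ, ContainsCopy (hypercube n) G

/-- The theta graph with two poles (\`Sum.inl 0\` and \`Sum.inl 1\`) and \`k\` legs, each a
path of length \`m ≥ 2\` with \`m - 1\` internal vertices: leg \`i\` is
\`pole 0, (i,0), (i,1), …, (i,m-2), pole 1\`. -/
def thetaGraph (k m : ℕ) : SimpleGraph (Fin 2 ⊕ (Fin k × Fin (m - 1))) :=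
  SimpleGraph.fromRel (fun x y =>
    match x, y with
    | Sum.inl p, Sum.inr (_, l) => (p = 0 ∧ l.val = 0) ∨ (p = 1 ∧ l.val = m - 2)
    | Sum.inr (i, l), Sum.inr (i', l') => i = i' ∧ l.val + 1 = l'.val
    | _, _ => False)

/-!
Take `k` leg coordinates `0, …, k - 1` and `m - 2` path coordinates `k, …, k + m - 3`. Leg `i`
is mapped to the path
`∅, {i}, {i, k}, {i, k, k + 1}, …, {i, k, …, k + m - 3}, {k, …, k + m - 3}`
of `Q_{k+m-2}`, each step adding or removing one coordinate. Vertices of different legs are told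
apart by their leg coordinate, vertices of the same leg by their size, and the two poles by
`m - 2 ≠ 0`.
-/

open Finset

theorem hypercube_adj_insert {n : ℕ} {A : Finset (Fin n)} {a : Fin n} (ha : a ∉ A) :
    (hypercube n).Adj A (insert a A) :=
  Or.inl ⟨subset_insert a A, card_insert_of_notMem ha⟩

theorem Fin.castAdd_ne_natAdd {k p : ℕ} (i : Fin k) (j : Fin p) :
    Fin.castAdd p i ≠ Fin.natAdd k j :=
  Fin.ne_of_val_ne (by simp only [Fin.val_castAdd, Fin.val_natAdd]; omega)

def pathCoords (k p l : ℕ) : Finset (Fin (k + p)) :=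
  (univ.filter fun j : Fin p ↦ (j : ℕ) < l).map (Fin.natAddEmb k)

section pathCoords

variable {k p l : ℕ}

@[simp]
theorem natAdd_mem_pathCoords {j : Fin p} :
    Fin.natAdd k j ∈ pathCoords k p l ↔ (j : ℕ) < l := by
  simp [pathCoords]

@[simp]
theorem castAdd_notMem_pathCoords (i : Fin k) : Fin.castAdd p i ∉ pathCoords k p l := by
  simp only [pathCoords, mem_map, Fin.natAddEmb_apply, not_exists, not_and]
  exact fun j _ h ↦ Fin.castAdd_ne_natAdd i j h.symm

@[simp]
theorem pathCoords_zero : pathCoords k p 0 = ∅ := by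
  simp [pathCoords]

theorem card_pathCoords : #(pathCoords k p l) = min p l := by
  simp [pathCoords, Fin.card_filter_val_lt]

theorem pathCoords_succ {j : ℕ} (hj : j < p) :
    pathCoords k p (j + 1) = insert (Fin.natAdd k ⟨j, hj⟩) (pathCoords k p j) := by
  have : (univ.filter fun i : Fin p ↦ (i : ℕ) < j + 1) =
      insert ⟨j, hj⟩ (univ.filter fun i : Fin p ↦ (i : ℕ) < j) := by
    ext i
    simp only [mem_filter, mem_univ, true_and, mem_insert, Fin.ext_iff]
    omega
  rw [pathCoords, pathCoords, this, map_insert]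
  rfl

end pathCoords

def thetaCubeMap (k m : ℕ) : Fin 2 ⊕ (Fin k × Fin (m - 1)) → Finset (Fin (k + (m - 2)))
  | .inl p => if p = 0 then ∅ else pathCoords k (m - 2) (m - 2)
  | .inr (i, l) => insert (Fin.castAdd (m - 2) i) (pathCoords k (m - 2) l)

section thetaCubeMap

variable {k m : ℕ}

theorem castAdd_mem_thetaCubeMap_inr {i i' : Fin k} {l : Fin (m - 1)} :
    Fin.castAdd (m - 2) i' ∈ thetaCubeMap k m (.inr (i, l)) ↔ i' = i := by
  simp [thetaCubeMap, Fin.castAdd_inj]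

theorem castAdd_mem_thetaCubeMap_inr_self (i : Fin k) (l : Fin (m - 1)) :
    Fin.castAdd (m - 2) i ∈ thetaCubeMap k m (.inr (i, l)) :=
  mem_insert_self _ _

theorem castAdd_notMem_thetaCubeMap_inl (i : Fin k) (p : Fin 2) :
    Fin.castAdd (m - 2) i ∉ thetaCubeMap k m (.inl p) := by
  dsimp only [thetaCubeMap]
  split_ifs <;> simp

theorem card_thetaCubeMap_inr (i : Fin k) (l : Fin (m - 1)) :
    #(thetaCubeMap k m (.inr (i, l))) = l + 1 := by
  rw [thetaCubeMap, card_insert_of_notMem (castAdd_notMem_pathCoords i), card_pathCoords]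
  omega

theorem thetaCubeMap_injective (hm : 3 ≤ m) : Function.Injective (thetaCubeMap k m) := by
  rintro (p | ⟨i, l⟩) (q | ⟨i', l'⟩) h
  · have hcard := congrArg card h
    fin_cases p <;> fin_cases q <;> simp [thetaCubeMap, card_pathCoords] at hcard ⊢ <;> omega
  · exact absurd (h ▸ castAdd_mem_thetaCubeMap_inr_self i' l')
      (castAdd_notMem_thetaCubeMap_inl i' p)
  · exact absurd (h ▸ castAdd_mem_thetaCubeMap_inr_self i l)
      (castAdd_notMem_thetaCubeMap_inl i q)
  · have hi : i = i' :=
      castAdd_mem_thetaCubeMap_inr.1 (h ▸ castAdd_mem_thetaCubeMap_inr_self i l)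
    have hl : l = l' := by
      have hcard := congrArg card h
      rw [card_thetaCubeMap_inr, card_thetaCubeMap_inr] at hcard
      exact Fin.ext (by omega)
    rw [hi, hl]

theorem thetaCubeMap_adj_inl_zero (i : Fin k) {l : Fin (m - 1)} (hl : (l : ℕ) = 0) :
    (hypercube _).Adj (thetaCubeMap k m (.inl 0)) (thetaCubeMap k m (.inr (i, l))) := by
  simpa [thetaCubeMap, hl] using hypercube_adj_insert (notMem_empty (Fin.castAdd (m - 2) i))

theorem thetaCubeMap_adj_inl_one (i : Fin k) {l : Fin (m - 1)} (hl : (l : ℕ) = m - 2) :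
    (hypercube _).Adj (thetaCubeMap k m (.inl 1)) (thetaCubeMap k m (.inr (i, l))) := by
  simpa [thetaCubeMap, hl] using
    hypercube_adj_insert (castAdd_notMem_pathCoords (p := m - 2) (l := m - 2) i)

theorem thetaCubeMap_adj_inr (i : Fin k) {l l' : Fin (m - 1)} (hl : (l : ℕ) + 1 = l') :
    (hypercube _).Adj (thetaCubeMap k m (.inr (i, l))) (thetaCubeMap k m (.inr (i, l'))) := by
  have hj : (l : ℕ) < m - 2 := by omega
  have hstep : thetaCubeMap k m (.inr (i, l')) =
      insert (Fin.natAdd k ⟨l, hj⟩) (thetaCubeMap k m (.inr (i, l))) := by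
    simp only [thetaCubeMap, ← hl, pathCoords_succ hj, insert_comm]
  rw [hstep]
  apply hypercube_adj_insert
  simp only [thetaCubeMap, mem_insert, natAdd_mem_pathCoords, not_or]
  exact ⟨(Fin.castAdd_ne_natAdd _ _).symm, lt_irrefl _⟩

theorem thetaCubeMap_adj_inl {p : Fin 2} (i : Fin k) {l : Fin (m - 1)}
    (h : (p = 0 ∧ (l : ℕ) = 0) ∨ (p = 1 ∧ (l : ℕ) = m - 2)) :
    (hypercube _).Adj (thetaCubeMap k m (.inl p)) (thetaCubeMap k m (.inr (i, l))) := by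
  rcases h with ⟨rfl, hl⟩ | ⟨rfl, hl⟩
  · exact thetaCubeMap_adj_inl_zero i hl
  · exact thetaCubeMap_adj_inl_one i hl

theorem thetaCubeMap_adj {u v : Fin 2 ⊕ (Fin k × Fin (m - 1))} (h : (thetaGraph k m).Adj u v) :
    (hypercube _).Adj (thetaCubeMap k m u) (thetaCubeMap k m v) := by
  rw [thetaGraph, fromRel_adj] at h
  rcases u with p | ⟨i, l⟩ <;> rcases v with q | ⟨i', l'⟩ <;>
    simp only [or_false, false_or] at h
  · exact h.2.elim
  · exact thetaCubeMap_adj_inl _ h.2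
  · exact (thetaCubeMap_adj_inl _ h.2).symm
  · rcases h.2 with ⟨rfl, hl⟩ | ⟨rfl, hl⟩
    · exact thetaCubeMap_adj_inr i hl
    · exact (thetaCubeMap_adj_inr i' hl).symm

end thetaCubeMap

theorem theta_cubical_general (m k : ℕ) (hm : 3 ≤ m) :
    IsCubical (thetaGraph k m) :=
  ⟨k + (m - 2), thetaCubeMap k m, thetaCubeMap_injective hm, fun _ _ ↦ thetaCubeMap_adj⟩

/-- For every integer `m ≥ 3` and every positive integer `k`, the theta graph with `k`
legs of length `m` each is cubical. -/
theorem theta_cubical (m k : ℕ) (hm : 3 ≤ m) (hk : 1 ≤ k) :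
    IsCubical (thetaGraph k m) :=
  theta_cubical_general m k hm
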